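/- Let σ be a non-crossing pairing of the (m_1,…,m_r)-annulus (σ ∈ NC_2(m_1,…,m_r)) and let B = {u,v} be a through string of σ, i.e. a cycle of σ whose two elements lie in different cycles of γ. Let σ' = σ·(u,v) (so u,v become fixed points). Then B is cutting (i.e. #(γ ∨ σ') = 2) if and only if u and v lie in the same cycle of γσ (i.e. B is a loop block). -/

import Mathlib

/-- The setoid on `α` whose classes are the cycles of the permutation `π`. -/
def cycleSetoid {α : Type*} (π : Equiv.Perm α) : Setoid α :=
  ⟨π.SameCycle, ⟨fun x => Equiv.Perm.SameCycle.refl π x,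
    fun h => h.symm, fun h1 h2 => h1.trans h2⟩⟩

/-- The number of cycles (including fixed points) of a permutation. -/
noncomputable def numCycles {α : Type*} (π : Equiv.Perm α) : ℕ :=
  Nat.card (Quotient (cycleSetoid π))

/-- The index set of the `(m 0, …, m (r-1))`-annulus. -/
def annIndex (r : ℕ) (m : Fin r → ℕ) : Type := Σ i : Fin r, Fin (m i)

instance (r : ℕ) (m : Fin r → ℕ) : DecidableEq (annIndex r m) := by
  unfold annIndex; infer_instance

/-- The permutation `γ_{m_1,…,m_r}` whose cycles are the `r` discrete circles
of sizes `m 0, …, m (r-1)`. -/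
def gammaAnn (r : ℕ) (m : Fin r → ℕ) : Equiv.Perm (annIndex r m) :=
  Equiv.sigmaCongrRight fun i => finRotate (m i)

/-! Write `v = σ u`, `σ' = σ·(u,v)` and `J = γ ∨ σ'`. Since `σ ∨ γ = 1`, joining `J` with
the single pair `{u, v}` gives `1`, so `#J = 2` exactly when `u` and `v` lie in different blocks
of `J`. Conjugating by the involution `σ`, the pair `u, v` lies in one cycle of `γσ` iff it lies
in one cycle of `σ⁻¹γ`, and `σ'⁻¹γ = (u,v)·σ⁻¹γ`. If `u, v` lie in different cycles of `σ⁻¹γ`,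
the transposition merges them into one cycle of `σ'⁻¹γ`, hence into one block of `J`. Otherwise
it splits that cycle, so `#σ' + #γ + #(σ'⁻¹γ) = m + 4`, and the genus inequality
`#π + #ρ + #(π⁻¹ρ) ≤ m + 2·#(π ∨ ρ)` forces `#J ≥ 2`. -/

open Equiv Equiv.Perm

section

variable {α : Type*}

theorem Equiv.Perm.SameCycle.induction_apply [Finite α] {f : Perm α} {P : α → Prop} {x y : α}
    (hxy : f.SameCycle x y) (hx : P x) (step : ∀ z, P z → P (f z)) : P y := by
  obtain ⟨n, rfl⟩ := hxy.exists_nat_pow_eq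
  clear hxy
  induction n with
  | zero => exact hx
  | succ n ih => rw [pow_succ', mul_apply]; exact step _ ih

theorem cycleSetoid_le_iff [Finite α] {f : Perm α} {s : Setoid α} :
    cycleSetoid f ≤ s ↔ ∀ x, s x (f x) :=
  ⟨fun h x => h (sameCycle_apply_right.mpr (SameCycle.refl f x)),
    fun h x _ hxy => hxy.induction_apply (s.refl' x) fun _ hz => s.trans' hz (h _)⟩

theorem cycleSetoid_inv (f : Perm α) : cycleSetoid f⁻¹ = cycleSetoid f :=
  Setoid.ext fun _ _ => sameCycle_inv

theorem cycleSetoid_one : cycleSetoid (1 : Perm α) = ⊥ :=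
  Setoid.ext fun _ _ => sameCycle_one

theorem cycleSetoid_mul_le [Finite α] (f g : Perm α) :
    cycleSetoid (f * g) ≤ cycleSetoid f ⊔ cycleSetoid g :=
  cycleSetoid_le_iff.mpr fun x =>
    (cycleSetoid f ⊔ cycleSetoid g).trans'
      (le_sup_right (a := cycleSetoid f) (sameCycle_apply_right.mpr (SameCycle.refl g x)))
      (le_sup_left (b := cycleSetoid g) (sameCycle_apply_right.mpr (SameCycle.refl f (g x))))

theorem cycleSetoid_inv_mul_le [Finite α] (f g : Perm α) :
    cycleSetoid (f⁻¹ * g) ≤ cycleSetoid f ⊔ cycleSetoid g :=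
  cycleSetoid_inv f ▸ cycleSetoid_mul_le f⁻¹ g

theorem numCycles_one [Finite α] : numCycles (1 : Perm α) = Nat.card α := by
  rw [numCycles, cycleSetoid_one, Nat.card_congr Setoid.quotientBotEquiv]

theorem card_quotient_le_of_le [Finite α] {s t : Setoid α} (h : s ≤ t) :
    Nat.card (Quotient t) ≤ Nat.card (Quotient s) :=
  Nat.card_le_card_of_surjective (Quotient.map' id h) (Quotient.ind fun x => ⟨⟦x⟧, rfl⟩)

theorem card_quotient_top [Nonempty α] : Nat.card (Quotient (⊤ : Setoid α)) = 1 :=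
  Nat.card_eq_one_iff_unique.mpr
    ⟨⟨Quotient.ind₂ fun _ _ => Quotient.sound trivial⟩,
      Nonempty.map (Quotient.mk _) ‹_›⟩

theorem Equiv.Perm.sameCycle_mul_comm_iff {f g : Perm α} {x y : α} :
    (g * f).SameCycle x y ↔ (f * g).SameCycle (f x) (f y) := by
  rw [show f * g = f * (g * f) * f⁻¹ by group, sameCycle_conj]
  simp

open Classical in
noncomputable def collapseClass (s : Setoid α) (a b : α) : α → Quotient s :=
  fun x => if s x b then ⟦a⟧ else ⟦x⟧

theorem range_collapseClass {s : Setoid α} {a b : α} (h : ¬ s a b) :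
    Set.range (collapseClass s a b) = Set.univ \ {⟦b⟧} := by
  ext q
  induction q using Quotient.inductionOn with | h x => ?_
  simp only [Set.mem_range, Set.mem_sdiff, Set.mem_univ, Set.mem_singleton_iff, true_and]
  constructor
  · rintro ⟨y, hy⟩
    rw [← hy]
    by_cases hyb : s y b
    · simpa only [collapseClass, if_pos hyb, Quotient.eq] using h
    · simpa only [collapseClass, if_neg hyb, Quotient.eq] using hyb
  · intro hx
    have hxb : ¬ s x b := fun hxb => hx (Quotient.sound hxb)
    exact ⟨x, by simp only [collapseClass, if_neg hxb]⟩

theorem Equiv.Perm.sameCycle_mul_iff_sameCycle_inv_mul {σ γ : Perm α}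
    (hσ : σ * σ = 1) (u : α) :
    (γ * σ).SameCycle u (σ u) ↔ (σ⁻¹ * γ).SameCycle u (σ u) := by
  have hσσ : σ (σ u) = u := by rw [← mul_apply, hσ, one_apply]
  rw [sameCycle_mul_comm_iff, hσσ, sameCycle_comm, inv_eq_of_mul_eq_one_right hσ]

variable [DecidableEq α]

theorem Equiv.Perm.commute_swap_apply_of_mul_self_eq_one {σ : Perm α}
    (hσ : σ * σ = 1) (u : α) : Commute σ (swap u (σ u)) := by
  have hσσ : σ (σ u) = u := by rw [← mul_apply, hσ, one_apply]
  refine mul_inv_eq_iff_eq_mul.mp ?_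
  rw [← swap_apply_apply, hσσ, swap_comm]

theorem cycleSetoid_swap_le [Finite α] {s : Setoid α} {a b : α} (h : s a b) :
    cycleSetoid (swap a b) ≤ s := by
  refine cycleSetoid_le_iff.mpr fun x => ?_
  rcases eq_or_ne x a with rfl | hxa
  · simpa using h
  rcases eq_or_ne x b with rfl | hxb
  · simpa using s.symm' h
  · rw [swap_apply_of_ne_of_ne hxa hxb]

theorem sup_cycleSetoid_swap_mul [Finite α] (f : Perm α) (a b : α) :
    cycleSetoid (swap a b * f) ⊔ cycleSetoid (swap a b) =
      cycleSetoid f ⊔ cycleSetoid (swap a b) := by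
  refine le_antisymm (sup_le ?_ le_sup_right) (sup_le ?_ le_sup_right)
  · exact (cycleSetoid_mul_le _ _).trans (sup_comm _ _).le
  · calc cycleSetoid f = cycleSetoid (swap a b * (swap a b * f)) := by rw [swap_mul_self_mul]
      _ ≤ _ := (cycleSetoid_mul_le _ _).trans (sup_comm _ _).le

theorem sup_cycleSetoid_swap_of_rel [Finite α] {s : Setoid α} {a b : α} (h : s a b) :
    s ⊔ cycleSetoid (swap a b) = s :=
  sup_eq_left.mpr (cycleSetoid_swap_le h)

theorem ker_collapseClass [Finite α] (s : Setoid α) (a b : α) :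
    Setoid.ker (collapseClass s a b) = s ⊔ cycleSetoid (swap a b) := by
  set J := s ⊔ cycleSetoid (swap a b)
  have hs : s ≤ J := le_sup_left
  have hJab : J a b := le_sup_right (a := s) (⟨1, by simp⟩ : (swap a b).SameCycle a b)
  have hrep : ∀ x w, collapseClass s a b x = ⟦w⟧ → J x w := by
    intro x w hw
    by_cases hx : s x b
    · simp only [collapseClass, if_pos hx, Quotient.eq] at hw
      exact J.trans' (hs hx) (J.trans' (J.symm' hJab) (hs hw))
    · simp only [collapseClass, if_neg hx, Quotient.eq] at hw
      exact hs hw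
  refine le_antisymm (fun x y hxy => ?_) (sup_le (fun x y hxy => ?_) ?_)
  · exact J.trans' (hrep x _ (by rw [Setoid.ker_def.mp hxy, Quotient.out_eq]))
      (J.symm' (hrep y _ (Quotient.out_eq _).symm))
  · have hb : s x b ↔ s y b := ⟨s.trans' (s.symm' hxy), s.trans' hxy⟩
    by_cases hxb : s x b
    · simp only [Setoid.ker_def, collapseClass, if_pos hxb, if_pos (hb.mp hxb)]
    · simp only [Setoid.ker_def, collapseClass, if_neg hxb, if_neg (mt hb.mpr hxb)]
      exact Quotient.sound hxy
  · refine cycleSetoid_le_iff.mpr fun x => ?_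
    rcases eq_or_ne x a with hxa | hxa
    · simp [Setoid.ker_def, collapseClass, hxa]
    rcases eq_or_ne x b with hxb | hxb
    · simp [Setoid.ker_def, collapseClass, hxb]
    · rw [swap_apply_of_ne_of_ne hxa hxb]

theorem card_quotient_sup_swap_add_one [Finite α] {s : Setoid α} {a b : α} (h : ¬ s a b) :
    Nat.card (Quotient (s ⊔ cycleSetoid (swap a b))) + 1 = Nat.card (Quotient s) := by
  rw [← ker_collapseClass, Nat.card_congr (Setoid.quotientKerEquivRange _), Nat.card_coe_set_eq,
    range_collapseClass h, Set.ncard_sdiff_singleton_add_one (Set.mem_univ _), Set.ncard_univ]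

theorem card_quotient_le_card_sup_swap_add_one [Finite α] (s : Setoid α) (a b : α) :
    Nat.card (Quotient s) ≤ Nat.card (Quotient (s ⊔ cycleSetoid (swap a b))) + 1 := by
  by_cases h : s a b
  · rw [sup_cycleSetoid_swap_of_rel h]
    exact Nat.le_succ _
  · exact (card_quotient_sup_swap_add_one h).ge

theorem card_quotient_eq_two_iff [Finite α] {s : Setoid α} {a b : α}
    (htop : s ⊔ cycleSetoid (swap a b) = ⊤) : Nat.card (Quotient s) = 2 ↔ ¬ s a b := by
  have : Nonempty α := ⟨a⟩
  by_cases h : s a b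
  · rw [sup_cycleSetoid_swap_of_rel h] at htop
    simp [h, htop, card_quotient_top]
  · simp [h, ← card_quotient_sup_swap_add_one h, htop, card_quotient_top]

theorem sameCycle_swap_mul_of_not_sameCycle [Finite α] {f : Perm α} {a b : α}
    (h : ¬ f.SameCycle a b) : (swap a b * f).SameCycle a b := by
  set g := swap a b * f
  by_contra hg
  -- `g` agrees with `f` along the `f`-cycle of `a`, except that it sends `f⁻¹ a` to `b`
  have step : ∀ z, f.SameCycle a z ∧ ¬ g.SameCycle z b →
      f.SameCycle a (f z) ∧ ¬ g.SameCycle (f z) b := by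
    rintro z ⟨hz, hzb⟩
    have hfz : f.SameCycle a (f z) := sameCycle_apply_right.mpr hz
    have hfza : f z ≠ a := fun e => hzb ⟨1, by simp [g, e]⟩
    have hfzb : f z ≠ b := fun e => h (e ▸ hfz)
    have hgz : g z = f z := swap_apply_of_ne_of_ne hfza hfzb
    exact ⟨hfz, fun hb => hzb (sameCycle_apply_left.mp (hgz ▸ hb))⟩
  have hinv : ¬ g.SameCycle (f⁻¹ a) b :=
    (SameCycle.induction_apply (⟨-1, by simp⟩ : f.SameCycle a (f⁻¹ a))
      ⟨SameCycle.refl f a, hg⟩ step).2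
  exact hinv ⟨1, by simp [g]⟩

theorem not_sameCycle_swap_mul_of_sameCycle [Finite α] {f : Perm α} {a b : α} (hab : a ≠ b)
    (h : f.SameCycle a b) : ¬ (swap a b * f).SameCycle a b := by
  classical
  have hP : ∃ k, 0 < k ∧ (f ^ k) a = b := by
    obtain ⟨k, hk⟩ := h.exists_nat_pow_eq
    exact ⟨k, Nat.pos_of_ne_zero fun h0 => hab (by simpa [h0] using hk), hk⟩
  set k := Nat.find hP
  obtain ⟨hk0, hkb⟩ : 0 < k ∧ (f ^ k) a = b := Nat.find_spec hP
  have hmin : ∀ j, 0 < j → j < k → (f ^ j) a ≠ b :=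
    fun j hj0 hjk hjb => Nat.find_min hP hjk ⟨hj0, hjb⟩
  -- the `(swap a b * f)`-cycle of `a` is the arc `a, f a, …, f^(k-1) a` of the `f`-cycle
  have step : ∀ z, (∃ j < k, (f ^ j) a = z) → ∃ j < k, (f ^ j) a = (swap a b * f) z := by
    rintro _ ⟨j, hjk, rfl⟩
    rw [mul_apply, ← mul_apply f, ← pow_succ']
    obtain hjk' | hjk' : j + 1 = k ∨ j + 1 < k := by omega
    · exact ⟨0, hk0, by rw [hjk', hkb, swap_apply_right, pow_zero, one_apply]⟩
    · refine ⟨j + 1, hjk',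
        (swap_apply_of_ne_of_ne (fun hja => ?_) (hmin _ j.succ_pos hjk')).symm⟩
      refine hmin (k - (j + 1)) (by omega) (by omega) ?_
      rw [← hkb, ← Nat.sub_add_cancel hjk'.le, pow_add, mul_apply, hja,
        Nat.sub_add_cancel hjk'.le]
  intro hg
  obtain ⟨j, hjk, hjb⟩ := hg.induction_apply ⟨0, hk0, rfl⟩ step
  rcases Nat.eq_zero_or_pos j with rfl | hj0
  · exact hab hjb
  · exact hmin j hj0 hjk hjb

theorem numCycles_swap_mul_of_sameCycle [Finite α] {f : Perm α} {a b : α} (hab : a ≠ b)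
    (h : f.SameCycle a b) : numCycles (swap a b * f) = numCycles f + 1 := by
  have := card_quotient_sup_swap_add_one (s := cycleSetoid (swap a b * f))
    (not_sameCycle_swap_mul_of_sameCycle hab h)
  rwa [sup_cycleSetoid_swap_mul, sup_cycleSetoid_swap_of_rel h, eq_comm] at this

theorem numCycles_swap_mul_add_one_of_not_sameCycle [Finite α] {f : Perm α} {a b : α}
    (h : ¬ f.SameCycle a b) : numCycles (swap a b * f) + 1 = numCycles f := by
  have := card_quotient_sup_swap_add_one (s := cycleSetoid f) h
  rwa [← sup_cycleSetoid_swap_mul,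
    sup_cycleSetoid_swap_of_rel (sameCycle_swap_mul_of_not_sameCycle h)] at this

-- `#f + #(f⁻¹ g) - 2 #(f ∨ g)` does not increase when the fixed point `x` of `f` is merged into
-- the cycle of `y`; stated without subtraction
theorem numCycles_add_numCycles_inv_mul_le_of_apply_eq_self [Finite α] (f g : Perm α) {x y : α}
    (hxy : x ≠ y) (hx : f x = x) :
    numCycles (swap x y * f) + numCycles ((swap x y * f)⁻¹ * g) +
        2 * Nat.card (Quotient (cycleSetoid f ⊔ cycleSetoid g)) ≤
      numCycles f + numCycles (f⁻¹ * g) +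
        2 * Nat.card (Quotient (cycleSetoid (swap x y * f) ⊔ cycleSetoid g)) := by
  set J := cycleSetoid f ⊔ cycleSetoid g
  set J' := cycleSetoid (swap x y * f) ⊔ cycleSetoid g
  have hmerge := numCycles_swap_mul_add_one_of_not_sameCycle (a := x) (b := y)
    fun h => hxy (h.eq_of_left hx)
  have hJ : J' ⊔ cycleSetoid (swap x y) = J ⊔ cycleSetoid (swap x y) := by
    rw [sup_right_comm, sup_cycleSetoid_swap_mul, sup_right_comm]
  -- `swap x (f⁻¹ y)` is the conjugate `swap (f⁻¹ x) (f⁻¹ y)` of `swap x y` by `f⁻¹`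
  have hconj : (swap x y * f)⁻¹ * g = swap x (f⁻¹ y) * (f⁻¹ * g) := by
    have hfx : f⁻¹ x = x := inv_eq_iff_eq.mpr hx.symm
    rw [← hfx, swap_apply_apply, inv_inv, hfx, mul_inv_rev, swap_inv]
    group
  by_cases hS : (f⁻¹ * g).SameCycle x (f⁻¹ y)
  · have hsplit := numCycles_swap_mul_of_sameCycle
      (fun h => hxy (hx.symm.trans (eq_inv_iff_eq.mp h))) hS
    have hJxy : J x y := J.trans' (cycleSetoid_inv_mul_le f g hS)
      (le_sup_left (b := cycleSetoid g) (⟨1, by simp⟩ : f.SameCycle (f⁻¹ y) y))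
    have hle : Nat.card (Quotient J) ≤ Nat.card (Quotient J') := by
      rw [← sup_cycleSetoid_swap_of_rel hJxy, ← hJ]
      exact card_quotient_le_of_le le_sup_left
    rw [hconj, hsplit]
    omega
  · have hmerge' := numCycles_swap_mul_add_one_of_not_sameCycle hS
    have hle := card_quotient_le_card_sup_swap_add_one J x y
    rw [← hJ] at hle
    have hle' := card_quotient_le_of_le (le_sup_left : J' ≤ J' ⊔ cycleSetoid (swap x y))
    rw [hconj]
    omega

theorem numCycles_add_numCycles_add_numCycles_inv_mul_le [Finite α] (f g : Perm α) :
    numCycles f + numCycles g + numCycles (f⁻¹ * g) ≤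
      Nat.card α + 2 * Nat.card (Quotient (cycleSetoid f ⊔ cycleSetoid g)) := by
  have := Fintype.ofFinite α
  induction hn : f.support.card using Nat.strong_induction_on generalizing f with
  | _ n ih =>
    by_cases hf : f = 1
    · subst hf
      rw [numCycles_one, inv_one, one_mul, cycleSetoid_one, bot_sup_eq]
      unfold numCycles
      omega
    obtain ⟨x, hx⟩ : ∃ x, f x ≠ x := not_forall.mp fun h => hf (Perm.ext h)
    set f₂ := swap x (f x) * f
    have hf₂x : f₂ x = x := by simp [f₂]
    have hstep := numCycles_add_numCycles_inv_mul_le_of_apply_eq_self f₂ g (Ne.symm hx) hf₂x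
    rw [swap_mul_self_mul] at hstep
    have := ih _ (hn ▸ card_support_swap_mul hx) f₂ rfl
    omega

end

instance (r : ℕ) (m : Fin r → ℕ) : Finite (annIndex r m) := by
  unfold annIndex; infer_instance

theorem cutting_iff_loopBlock_general (r : ℕ) (m : Fin r → ℕ)
    (σ : Equiv.Perm (annIndex r m))
    (hfix : ∀ x, σ x ≠ x) (hinv : σ * σ = 1)
    (hjoin : cycleSetoid σ ⊔ cycleSetoid (gammaAnn r m) = ⊤)
    (hcnt : numCycles σ + numCycles (gammaAnn r m) +
        numCycles (σ⁻¹ * gammaAnn r m) = Nat.card (annIndex r m) + 2)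
    (u : annIndex r m) :
    Nat.card (Quotient (cycleSetoid (gammaAnn r m) ⊔
        cycleSetoid (σ * Equiv.swap u (σ u)))) = 2 ↔
      (gammaAnn r m * σ).SameCycle u (σ u) := by
  set γ := gammaAnn r m
  set τ := swap u (σ u)
  have hcomm : σ * τ = τ * σ := commute_swap_apply_of_mul_self_eq_one hinv u
  have hnum : numCycles (σ * τ) = numCycles σ + 1 :=
    hcomm ▸ numCycles_swap_mul_of_sameCycle (hfix u).symm ⟨1, rfl⟩
  have hinvγ : (σ * τ)⁻¹ * γ = τ * (σ⁻¹ * γ) := by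
    rw [mul_inv_rev, swap_inv, mul_assoc]
  have htop : cycleSetoid γ ⊔ cycleSetoid (σ * τ) ⊔ cycleSetoid τ = ⊤ := by
    rw [sup_assoc, hcomm, sup_cycleSetoid_swap_mul, ← sup_assoc, sup_comm (cycleSetoid γ), hjoin,
      top_sup_eq]
  rw [card_quotient_eq_two_iff htop, sameCycle_mul_iff_sameCycle_inv_mul hinv]
  constructor
  · intro hJ
    by_contra hloop
    have hmerge := hinvγ ▸ sameCycle_swap_mul_of_not_sameCycle hloop
    exact hJ ((cycleSetoid_inv_mul_le _ _).trans (sup_comm _ _).le hmerge)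
  · intro hloop hJ
    have : Nonempty (annIndex r m) := ⟨u⟩
    have hgenus := numCycles_add_numCycles_add_numCycles_inv_mul_le (σ * τ) γ
    rw [hnum, hinvγ, numCycles_swap_mul_of_sameCycle (hfix u).symm hloop, sup_comm,
      ← sup_cycleSetoid_swap_of_rel hJ, htop, card_quotient_top] at hgenus
    omega

/-- Let `σ ∈ NC₂(m_1,…,m_r)` be a non-crossing pairing of the annulus
(a fixed-point-free involution with `σ ∨ γ = 1` and
`#(σ)+#(γ)+#(σ⁻¹γ) = m+2`), and let `{u, σ u}` be a through string (its two
elements lie in different cycles of `γ`).  Let `σ' = σ·(u, σ u)`, in which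
`u` and `σ u` become fixed points.  Then `{u, σ u}` is cutting, i.e.
`#(γ ∨ σ') = 2`, if and only if `u` and `σ u` lie in the same cycle of
`γσ` (i.e. `{u, σ u}` is a loop block). -/
theorem cutting_iff_loopBlock (r : ℕ) (m : Fin r → ℕ)
    (σ : Equiv.Perm (annIndex r m))
    (hfix : ∀ x, σ x ≠ x) (hinv : σ * σ = 1)
    (hjoin : cycleSetoid σ ⊔ cycleSetoid (gammaAnn r m) = ⊤)
    (hcnt : numCycles σ + numCycles (gammaAnn r m) +
        numCycles (σ⁻¹ * gammaAnn r m) = Nat.card (annIndex r m) + 2)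
    (u : annIndex r m)
    (hthrough : ¬ (gammaAnn r m).SameCycle u (σ u)) :
    Nat.card (Quotient (cycleSetoid (gammaAnn r m) ⊔
        cycleSetoid (σ * Equiv.swap u (σ u)))) = 2 ↔
      (gammaAnn r m * σ).SameCycle u (σ u) :=
  cutting_iff_loopBlock_general r m σ hfix hinv hjoin hcnt u
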